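/- For every even natural number m > 0, ∫₀^π φ²·cosᵐ(φ)·sin(φ) dφ = (1/(m+1))·(π² − 4·(m!!/(m+1)!!)·(1 + Σ_{j=0}^{m/2−1} (1/(2^{2j+1}(2j+3)))·C(2j+1, j))), where C(n,k) is the binomial coefficient. -/

import Mathlib

/-!
Integrating by parts turns the integral into `Iₘ₊₁`, where `Iₙ = ∫₀^π t cosⁿ t dt`. Another
integration by parts gives the recursion `(n+2) Iₙ₊₂ = (n+1) Iₙ - 2/(n+2)` for odd `n`, starting
from `I₁ = -2`. By the identity `(2k+2)‼ C(2k+1, k) = 2^(2k+1) (2k+1)‼`, each step of the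
recursion adds the next term of the sum.
-/

open Real Nat intervalIntegral

lemma integral_mul_cos : ∫ t in (0:ℝ)..π, t * cos t = -2 := by
  have hderiv (t : ℝ) : HasDerivAt (fun t => t * sin t + cos t) (t * cos t) t :=
    (((hasDerivAt_id' t).mul (hasDerivAt_sin t)).add (hasDerivAt_cos t)).congr_deriv (by ring)
  rw [integral_eq_sub_of_hasDerivAt (fun t _ => hderiv t)
    ((by fun_prop : Continuous _).intervalIntegrable _ _)]
  norm_num

lemma integral_mul_cos_pow_add_two (n : ℕ) :
    (n + 2 : ℝ) * ∫ t in (0:ℝ)..π, t * cos t ^ (n + 2) =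
      (n + 1) * (∫ t in (0:ℝ)..π, t * cos t ^ n) + ((-1) ^ n - 1) / (n + 2) := by
  have hn : (n + 2 : ℝ) ≠ 0 := by positivity
  have hderiv (t : ℝ) :
      HasDerivAt (fun t => t * cos t ^ (n + 1) * sin t + cos t ^ (n + 2) / (n + 2))
        ((n + 2) * (t * cos t ^ (n + 2)) - (n + 1) * (t * cos t ^ n)) t := by
    refine ((((hasDerivAt_id' t).mul ((hasDerivAt_cos t).pow _)).mul (hasDerivAt_sin t)).add
      (((hasDerivAt_cos t).pow _).div_const _)).congr_deriv ?_
    simp only [Pi.pow_apply, Pi.mul_apply, add_tsub_cancel_right]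
    field_simp
    push_cast
    linear_combination (-(n + 1) * (n + 2) * t * cos t ^ n) * sin_sq_add_cos_sq t
  have hFTC := integral_eq_sub_of_hasDerivAt (a := 0) (b := π) (fun t _ => hderiv t)
    ((by fun_prop : Continuous _).intervalIntegrable _ _)
  rw [integral_sub ((by fun_prop : Continuous _).intervalIntegrable _ _)
    ((by fun_prop : Continuous _).intervalIntegrable _ _), integral_const_mul,
    integral_const_mul] at hFTC
  simp only [cos_pi, sin_pi, cos_zero, sin_zero, mul_zero, zero_mul, zero_add, one_pow] at hFTC
  linear_combination hFTC

lemma integral_sq_mul_cos_pow_mul_sin (m : ℕ) :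
    (m + 1 : ℝ) * ∫ t in (0:ℝ)..π, t ^ 2 * cos t ^ m * sin t =
      (-1) ^ m * π ^ 2 + 2 * ∫ t in (0:ℝ)..π, t * cos t ^ (m + 1) := by
  have hderiv (t : ℝ) : HasDerivAt (fun t => -(t ^ 2 * cos t ^ (m + 1)))
      ((m + 1) * (t ^ 2 * cos t ^ m * sin t) - 2 * (t * cos t ^ (m + 1))) t := by
    refine (((hasDerivAt_pow 2 t).mul ((hasDerivAt_cos t).pow (m + 1))).neg).congr_deriv ?_
    simp only [Pi.pow_apply, add_tsub_cancel_right]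
    push_cast
    ring
  have hFTC := integral_eq_sub_of_hasDerivAt (a := 0) (b := π) (fun t _ => hderiv t)
    ((by fun_prop : Continuous _).intervalIntegrable _ _)
  rw [integral_sub ((by fun_prop : Continuous _).intervalIntegrable _ _)
    ((by fun_prop : Continuous _).intervalIntegrable _ _), integral_const_mul,
    integral_const_mul] at hFTC
  simp only [cos_pi, cos_zero, one_pow] at hFTC
  linear_combination hFTC

lemma doubleFactorial_mul_choose (k : ℕ) :
    (2 * k + 2)‼ * (2 * k + 1).choose k = 2 ^ (2 * k + 1) * (2 * k + 1)‼ := by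
  have hchoose : (2 * k + 1).choose k * k ! * (k + 1)! = (2 * k + 1)! := by
    simpa [show 2 * k + 1 - k = k + 1 by omega] using
      Nat.choose_mul_factorial_mul_factorial (show k ≤ 2 * k + 1 by omega)
  have hfact : (2 * k + 1)! = (2 * k + 1)‼ * (2 ^ k * k !) := by
    rw [← Nat.doubleFactorial_two_mul, ← Nat.factorial_eq_mul_doubleFactorial]
  apply Nat.eq_of_mul_eq_mul_right (mul_pos (factorial_pos k) (factorial_pos (k + 1)))
  calc (2 * k + 2)‼ * (2 * k + 1).choose k * (k ! * (k + 1)!)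
      = 2 ^ (k + 1) * (k + 1)! * (2 * k + 1)! := by
        rw [← hchoose, show 2 * k + 2 = 2 * (k + 1) by ring, Nat.doubleFactorial_two_mul]; ring
    _ = 2 ^ (2 * k + 1) * (2 * k + 1)‼ * (k ! * (k + 1)!) := by rw [hfact]; ring

lemma integral_mul_cos_pow_odd (k : ℕ) :
    ∫ t in (0:ℝ)..π, t * cos t ^ (2 * k + 1) =
      -2 * (((2 * k)‼ : ℝ) / ((2 * k + 1)‼ : ℝ)) *
        (1 + ∑ j ∈ Finset.range k,
          1 / (2 ^ (2 * j + 1) * (2 * j + 3) : ℝ) * ((2 * j + 1).choose j : ℝ)) := by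
  induction k with
  | zero => simpa using integral_mul_cos
  | succ k ih =>
    have hrec := integral_mul_cos_pow_add_two (2 * k + 1)
    have hkey : ((2 * k + 2) * (2 * k)‼ * (2 * k + 1).choose k : ℝ) =
        2 ^ (2 * k + 1) * (2 * k + 1)‼ := by
      exact_mod_cast Nat.doubleFactorial_add_two (2 * k) ▸ doubleFactorial_mul_choose k
    rw [show 2 * (k + 1) + 1 = 2 * k + 1 + 2 by ring, show 2 * (k + 1) = 2 * k + 2 by ring,
      Nat.doubleFactorial_add_two, Nat.doubleFactorial_add_two, Finset.sum_range_succ]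
    rw [ih, Odd.neg_one_pow ⟨k, rfl⟩] at hrec
    generalize ∫ t in (0:ℝ)..π, t * cos t ^ (2 * k + 1 + 2) = I at hrec ⊢
    generalize ∑ j ∈ Finset.range k,
      1 / (2 ^ (2 * j + 1) * (2 * j + 3) : ℝ) * ((2 * j + 1).choose j : ℝ) = S at hrec ⊢
    push_cast at hrec ⊢
    field_simp at hrec ⊢
    linear_combination 2 ^ (2 * k + 1) * hrec + 2 * hkey

theorem J_even_general (m : ℕ) (hm : Even m) :
    ∫ t in (0:ℝ)..π, t ^ 2 * Real.cos t ^ m * Real.sin t =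
      1 / (m + 1) *
        (π ^ 2 - 4 * ((m‼ : ℝ) / ((m + 1)‼ : ℝ)) *
          (1 + ∑ j ∈ Finset.range (m / 2),
            1 / (2 ^ (2 * j + 1) * (2 * j + 3) : ℝ) * ((2 * j + 1).choose j : ℝ))) := by
  obtain ⟨k, rfl⟩ := hm
  rw [← two_mul, Nat.mul_div_cancel_left k two_pos]
  have hparts := integral_sq_mul_cos_pow_mul_sin (2 * k)
  rw [integral_mul_cos_pow_odd, Even.neg_one_pow ⟨k, two_mul k⟩] at hparts
  rw [one_div_mul_eq_div, eq_div_iff (by positivity)]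
  linear_combination hparts

theorem J_even (m : ℕ) (hm : Even m) (hm0 : 0 < m) :
    ∫ t in (0:ℝ)..π, t ^ 2 * Real.cos t ^ m * Real.sin t =
      1 / (m + 1) *
        (π ^ 2 - 4 * ((m‼ : ℝ) / ((m + 1)‼ : ℝ)) *
          (1 + ∑ j ∈ Finset.range (m / 2),
            1 / (2 ^ (2 * j + 1) * (2 * j + 3) : ℝ) * ((2 * j + 1).choose j : ℝ))) :=
  J_even_general m hm
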